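/- Let F be a prime field of order p and μ a probability measure on F^n with |μ̂(ξ)| ≤ C·p^{−β/2} for all ξ ≠ 0, where 0 < β < n. Then for every q ≥ 4n/β and every f : F^n → ℂ, ‖(fμ)^∧‖_{L^q(F^n)} ≤ C'·‖f‖_{L²(μ)}, where C' is independent of p. -/

import Mathlib

/-!
Stein–Tomas by duality. Put `g = (fμ)^∧`, `S = ∑ |g|^q` and `h = |g|^(q-2) g`, so that
`S = ∑ conj h · g = ∑ₓ f μ · conj ȟ`; Cauchy–Schwarz in `L²(μ)` gives `S² ≤ ‖f‖²_{L²(μ)} ‖ȟ‖²_{L²(μ)}`.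
Expanding, `‖ȟ‖²_{L²(μ)} = ∑_{ξ,η} h(ξ) conj h(η) μ̂(η - ξ)`: the diagonal (`μ̂(0) = 1`) is
`∑ |g|^(2q-2) ≤ S^(2-2/q)`, and the decay of `μ̂` with Hölder bounds the rest by
`C p^(-β/2) (∑ |g|^(q-1))² ≤ C p^(-β/2) p^(2n/q) S^(2-2/q)`, where `p^(-β/2) p^(2n/q) ≤ 1` because
`q ≥ 4n/β`. Hence `S² ≤ (1 + C) ‖f‖²_{L²(μ)} S^(2-2/q)`, i.e. `S^(1/q) ≤ √(1 + C) ‖f‖_{L²(μ)}`.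
-/

open Finset

noncomputable def e (p : ℕ) (t : ZMod p) : ℂ :=
  Complex.exp (2 * Real.pi * Complex.I * (t.val : ℂ) / (p : ℂ))

noncomputable def dft {p n : ℕ} [NeZero p] (f : (Fin n → ZMod p) → ℂ)
    (ξ : Fin n → ZMod p) : ℂ :=
  ∑ x : Fin n → ZMod p, e p (-(∑ i, x i * ξ i)) * f x

open ComplexConjugate

section RealInequalities

variable {ι : Type*} (s : Finset ι) {a : ι → ℝ} {q r : ℝ}

theorem sum_rpow_le_rpow_sum_rpow (ha : ∀ i ∈ s, 0 ≤ a i) (hq : 0 < q) (hqr : q ≤ r) :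
    ∑ i ∈ s, a i ^ r ≤ (∑ i ∈ s, a i ^ q) ^ (r / q) := by
  set S := ∑ i ∈ s, a i ^ q
  have hS : 0 ≤ S := sum_nonneg fun i hi => Real.rpow_nonneg (ha i hi) q
  have hterm : ∀ i ∈ s, a i ^ r ≤ a i ^ q * S ^ ((r - q) / q) := by
    intro i hi
    have hsplit : a i ^ r = a i ^ q * (a i ^ q) ^ ((r - q) / q) := by
      rw [← Real.rpow_mul (ha i hi), mul_div_cancel₀ _ hq.ne', ← Real.rpow_add' (ha i hi)]
      · ring_nf
      · linarith
    rw [hsplit]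
    gcongr
    any_goals exact Real.rpow_nonneg (ha i hi) q
    exact single_le_sum (fun j hj => Real.rpow_nonneg (ha j hj) q) hi
  calc ∑ i ∈ s, a i ^ r ≤ ∑ i ∈ s, a i ^ q * S ^ ((r - q) / q) := sum_le_sum hterm
    _ = S ^ (1 + (r - q) / q) := by
      rw [← sum_mul, Real.rpow_add' hS (by positivity), Real.rpow_one]
    _ = S ^ (r / q) := by
      congr 1
      field_simp
      ring

theorem sum_rpow_sub_one_le (ha : ∀ i ∈ s, 0 ≤ a i) (hq : 1 < q) :
    ∑ i ∈ s, a i ^ (q - 1) ≤ (#s : ℝ) ^ (1 / q) * (∑ i ∈ s, a i ^ q) ^ ((q - 1) / q) := by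
  have hq1 : q - 1 ≠ 0 := by linarith
  have holder := Real.inner_le_Lp_mul_Lq_of_nonneg s (Real.HolderConjugate.conjExponent hq)
    (f := fun _ => 1) (g := fun i => a i ^ (q - 1)) (fun _ _ => zero_le_one)
    (fun i hi => Real.rpow_nonneg (ha i hi) _)
  have hpow : ∀ i ∈ s, (a i ^ (q - 1)) ^ q.conjExponent = a i ^ q := by
    intro i hi
    rw [← Real.rpow_mul (ha i hi), Real.conjExponent, mul_div_cancel₀ _ hq1]
  simp only [one_mul, Real.one_rpow, sum_const, nsmul_eq_mul, mul_one] at holder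
  rwa [sum_congr rfl hpow, Real.conjExponent, one_div_div] at holder

theorem rpow_one_div_le_sqrt_of_sq_le_mul_rpow {S K : ℝ} (hS : 0 ≤ S) (hq : 0 < q)
    (h : S ^ 2 ≤ K * S ^ ((2 * q - 2) / q)) : S ^ (1 / q) ≤ √K := by
  rcases hS.eq_or_lt with rfl | hSpos
  · rw [Real.zero_rpow (one_div_ne_zero hq.ne')]
    exact Real.sqrt_nonneg K
  have hsplit : S ^ 2 = S ^ (2 / q) * S ^ ((2 * q - 2) / q) := by
    rw [← Real.rpow_natCast, ← Real.rpow_add hSpos]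
    congr 1
    field_simp
    ring
  have hK : S ^ (2 / q) ≤ K :=
    le_of_mul_le_mul_right (hsplit ▸ h) (Real.rpow_pos_of_pos hSpos _)
  calc S ^ (1 / q) = √(S ^ (2 / q)) := by
        rw [Real.sqrt_eq_rpow, ← Real.rpow_mul hS]
        ring_nf
    _ ≤ √K := Real.sqrt_le_sqrt hK

end RealInequalities

noncomputable def holderDual (q : ℝ) (z : ℂ) : ℂ := ((‖z‖ ^ (q - 2) : ℝ) : ℂ) * z

theorem norm_holderDual {q : ℝ} (hq : 2 ≤ q) (z : ℂ) : ‖holderDual q z‖ = ‖z‖ ^ (q - 1) := by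
  rw [holderDual, norm_mul, Complex.norm_real, Real.norm_of_nonneg (by positivity),
    ← Real.rpow_add_one' (norm_nonneg z) (by linarith)]
  ring_nf

theorem conj_holderDual_mul_self {q : ℝ} (hq : 2 ≤ q) (z : ℂ) :
    conj (holderDual q z) * z = ((‖z‖ ^ q : ℝ) : ℂ) := by
  rw [holderDual, map_mul, Complex.conj_ofReal, mul_assoc, ← Complex.normSq_eq_conj_mul_self,
    Complex.normSq_eq_norm_sq, ← Complex.ofReal_mul, ← Real.rpow_natCast,
    ← Real.rpow_add' (norm_nonneg z) (by push_cast; linarith)]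
  norm_num

section Fourier

variable {p n : ℕ} [NeZero p]

theorem e_eq_stdAddChar (t : ZMod p) : e p t = ZMod.stdAddChar t := by
  rw [e, ZMod.stdAddChar_apply, ZMod.toCircle_apply]

theorem e_zero : e p 0 = 1 := by
  rw [e_eq_stdAddChar, AddChar.map_zero_eq_one]

theorem e_add (a b : ZMod p) : e p (a + b) = e p a * e p b := by
  simp only [e_eq_stdAddChar, AddChar.map_add_eq_mul]

theorem e_neg (t : ZMod p) : e p (-t) = conj (e p t) := by
  simp only [e_eq_stdAddChar, AddChar.map_neg_eq_conj]

theorem e_mul_conj_e (x ξ η : Fin n → ZMod p) :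
    e p (∑ i, x i * ξ i) * conj (e p (∑ i, x i * η i)) = e p (-(∑ i, x i * (η - ξ) i)) := by
  rw [← e_neg, ← e_add]
  congr 1
  simp only [Pi.sub_apply, mul_sub, sum_sub_distrib]
  ring

noncomputable def idft (h : (Fin n → ZMod p) → ℂ) (x : Fin n → ZMod p) : ℂ :=
  ∑ ξ, e p (∑ i, x i * ξ i) * h ξ

theorem dft_zero (φ : (Fin n → ZMod p) → ℂ) : dft φ 0 = ∑ x, φ x := by
  simp [dft, e_zero]

theorem sum_conj_mul_dft (φ h : (Fin n → ZMod p) → ℂ) :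
    ∑ ξ, conj (h ξ) * dft φ ξ = ∑ x, φ x * conj (idft h x) := by
  simp only [dft, idft, map_sum, map_mul, e_neg, mul_sum]
  rw [sum_comm]
  exact sum_congr rfl fun x _ => sum_congr rfl fun ξ _ => by ring

theorem sum_idft_mul_conj_mul (h ν : (Fin n → ZMod p) → ℂ) :
    ∑ x, idft h x * conj (idft h x) * ν x = ∑ ξ, ∑ η, h ξ * conj (h η) * dft ν (η - ξ) := by
  calc ∑ x, idft h x * conj (idft h x) * ν x
      = ∑ x, ∑ ξ, ∑ η, h ξ * conj (h η) * (e p (-(∑ i, x i * (η - ξ) i)) * ν x) := by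
        refine sum_congr rfl fun x _ => ?_
        simp only [idft, map_sum, map_mul, sum_mul, mul_sum]
        rw [sum_comm]
        refine sum_congr rfl fun ξ _ => sum_congr rfl fun η _ => ?_
        rw [← e_mul_conj_e]
        ring
    _ = ∑ ξ, ∑ η, ∑ x, h ξ * conj (h η) * (e p (-(∑ i, x i * (η - ξ) i)) * ν x) := by
        rw [sum_comm]
        exact sum_congr rfl fun ξ _ => sum_comm
    _ = ∑ ξ, ∑ η, h ξ * conj (h η) * dft ν (η - ξ) := by
        simp only [dft, mul_sum]

end Fourier

section Restriction

variable {p n : ℕ} [NeZero p] {μ : (Fin n → ZMod p) → ℝ} {δ : ℝ}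

theorem norm_sum_conj_mul_dft_sq_le (hμ0 : ∀ x, 0 ≤ μ x) (f h : (Fin n → ZMod p) → ℂ) :
    ‖∑ ξ, conj (h ξ) * dft (fun x => f x * μ x) ξ‖ ^ 2 ≤
      (∑ x, ‖f x‖ ^ 2 * μ x) * ∑ x, ‖idft h x‖ ^ 2 * μ x := by
  have hnorm : ‖∑ ξ, conj (h ξ) * dft (fun x => f x * μ x) ξ‖ ≤
      ∑ x, ‖f x‖ * ‖idft h x‖ * μ x := by
    rw [sum_conj_mul_dft]
    refine (norm_sum_le _ _).trans_eq (sum_congr rfl fun x _ => ?_)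
    rw [norm_mul, norm_mul, Complex.norm_conj, Complex.norm_real, Real.norm_of_nonneg (hμ0 x)]
    ring
  refine (pow_le_pow_left₀ (norm_nonneg _) hnorm 2).trans ?_
  exact sum_sq_le_sum_mul_sum_of_sq_le_mul _ (fun x _ => mul_nonneg (sq_nonneg _) (hμ0 x))
    (fun x _ => mul_nonneg (sq_nonneg _) (hμ0 x)) (fun x _ => (by ring : _ = _).le)

theorem norm_dft_le_ite_add (hμ1 : ∑ x, μ x = 1) (hδ : 0 ≤ δ)
    (hdecay : ∀ ξ, ξ ≠ 0 → ‖dft (fun x => (μ x : ℂ)) ξ‖ ≤ δ) (ξ : Fin n → ZMod p) :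
    ‖dft (fun x => (μ x : ℂ)) ξ‖ ≤ (if ξ = 0 then 1 else 0) + δ := by
  by_cases hξ : ξ = 0
  · rw [if_pos hξ, hξ, dft_zero, ← Complex.ofReal_sum, hμ1, Complex.ofReal_one, norm_one]
    linarith
  · rw [if_neg hξ, zero_add]
    exact hdecay ξ hξ

theorem sum_sq_norm_idft_mul_le (hμ0 : ∀ x, 0 ≤ μ x) (hμ1 : ∑ x, μ x = 1) (hδ : 0 ≤ δ)
    (hdecay : ∀ ξ, ξ ≠ 0 → ‖dft (fun x => (μ x : ℂ)) ξ‖ ≤ δ) (h : (Fin n → ZMod p) → ℂ) :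
    ∑ x, ‖idft h x‖ ^ 2 * μ x ≤ ∑ ξ, ‖h ξ‖ ^ 2 + δ * (∑ ξ, ‖h ξ‖) ^ 2 := by
  have hcast : ((∑ x, ‖idft h x‖ ^ 2 * μ x : ℝ) : ℂ) =
      ∑ x, idft h x * conj (idft h x) * μ x := by
    push_cast
    refine sum_congr rfl fun x _ => ?_
    rw [Complex.mul_conj, Complex.normSq_eq_norm_sq]
    push_cast
    ring
  calc ∑ x, ‖idft h x‖ ^ 2 * μ x = ‖((∑ x, ‖idft h x‖ ^ 2 * μ x : ℝ) : ℂ)‖ := by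
        rw [Complex.norm_real, Real.norm_of_nonneg]
        exact sum_nonneg fun x _ => mul_nonneg (sq_nonneg _) (hμ0 x)
    _ ≤ ∑ ξ, ∑ η, ‖h ξ‖ * ‖h η‖ * ((if η - ξ = 0 then 1 else 0) + δ) := by
        rw [hcast, sum_idft_mul_conj_mul]
        refine (norm_sum_le _ _).trans (sum_le_sum fun ξ _ =>
          (norm_sum_le _ _).trans (sum_le_sum fun η _ => ?_))
        rw [norm_mul, norm_mul, Complex.norm_conj]
        gcongr
        exact norm_dft_le_ite_add hμ1 hδ hdecay _
    _ = ∑ ξ, ‖h ξ‖ ^ 2 + δ * (∑ ξ, ‖h ξ‖) ^ 2 := by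
        simp only [mul_add, sum_add_distrib, sub_eq_zero, mul_ite, mul_one, mul_zero, sum_ite_eq',
          mem_univ, if_true, ← sum_mul, ← mul_sum, sq]
        ring

theorem rpow_sum_norm_dft_le_of_decay {q : ℝ} (hq : 2 ≤ q) (hμ0 : ∀ x, 0 ≤ μ x)
    (hμ1 : ∑ x, μ x = 1) (hδ : 0 ≤ δ)
    (hdecay : ∀ ξ, ξ ≠ 0 → ‖dft (fun x => (μ x : ℂ)) ξ‖ ≤ δ) (f : (Fin n → ZMod p) → ℂ) :
    (∑ ξ, ‖dft (fun x => f x * μ x) ξ‖ ^ q) ^ (1 / q) ≤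
      √(1 + δ * ((p : ℝ) ^ n) ^ (2 / q)) * (∑ x, ‖f x‖ ^ 2 * μ x) ^ ((1 : ℝ) / 2) := by
  set g := dft (fun x => f x * (μ x : ℂ))
  set S := ∑ ξ, ‖g ξ‖ ^ q
  set F := ∑ x, ‖f x‖ ^ 2 * μ x
  set K := 1 + δ * ((p : ℝ) ^ n) ^ (2 / q)
  set h := fun ξ => holderDual q (g ξ)
  have hq0 : 0 < q := by linarith
  have hS0 : 0 ≤ S := sum_nonneg fun ξ _ => Real.rpow_nonneg (norm_nonneg _) q
  have hS : S = ‖∑ ξ, conj (h ξ) * g ξ‖ := by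
    simp only [h, conj_holderDual_mul_self hq, ← Complex.ofReal_sum, Complex.norm_real,
      Real.norm_of_nonneg hS0, S]
  have hdiag : ∑ ξ, ‖h ξ‖ ^ 2 ≤ S ^ ((2 * q - 2) / q) := by
    simp only [h, norm_holderDual hq, ← Real.rpow_natCast, ← Real.rpow_mul (norm_nonneg _)]
    convert sum_rpow_le_rpow_sum_rpow univ (fun ξ _ => norm_nonneg (g ξ)) hq0
      (r := 2 * q - 2) (by linarith) using 3
    push_cast
    ring
  have hoff : (∑ ξ, ‖h ξ‖) ^ 2 ≤ ((p : ℝ) ^ n) ^ (2 / q) * S ^ ((2 * q - 2) / q) := by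
    have hN : (#(univ : Finset (Fin n → ZMod p)) : ℝ) = (p : ℝ) ^ n := by simp [ZMod.card]
    have holder := sum_rpow_sub_one_le univ (fun ξ _ => norm_nonneg (g ξ)) (by linarith : 1 < q)
    rw [hN] at holder
    calc (∑ ξ, ‖h ξ‖) ^ 2 ≤ (((p : ℝ) ^ n) ^ (1 / q) * S ^ ((q - 1) / q)) ^ 2 := by
          simp only [h, norm_holderDual hq]
          exact pow_le_pow_left₀ (sum_nonneg fun ξ _ => by positivity) holder 2
      _ = ((p : ℝ) ^ n) ^ (2 / q) * S ^ ((2 * q - 2) / q) := by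
          rw [mul_pow, ← Real.rpow_natCast, ← Real.rpow_natCast (S ^ _), ← Real.rpow_mul hS0,
            ← Real.rpow_mul (by positivity)]
          ring_nf
  have hG : ∑ x, ‖idft h x‖ ^ 2 * μ x ≤ K * S ^ ((2 * q - 2) / q) :=
    calc ∑ x, ‖idft h x‖ ^ 2 * μ x ≤ ∑ ξ, ‖h ξ‖ ^ 2 + δ * (∑ ξ, ‖h ξ‖) ^ 2 :=
          sum_sq_norm_idft_mul_le hμ0 hμ1 hδ hdecay h
      _ ≤ S ^ ((2 * q - 2) / q) + δ * (((p : ℝ) ^ n) ^ (2 / q) * S ^ ((2 * q - 2) / q)) := by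
          gcongr
      _ = K * S ^ ((2 * q - 2) / q) := by ring
  have hSF : S ^ 2 ≤ K * F * S ^ ((2 * q - 2) / q) :=
    calc S ^ 2 ≤ F * ∑ x, ‖idft h x‖ ^ 2 * μ x := by
          rw [hS]
          exact norm_sum_conj_mul_dft_sq_le hμ0 f h
      _ ≤ F * (K * S ^ ((2 * q - 2) / q)) := by
          gcongr
          exact sum_nonneg fun x _ => mul_nonneg (sq_nonneg _) (hμ0 x)
      _ = K * F * S ^ ((2 * q - 2) / q) := by ring
  calc S ^ (1 / q) ≤ √(K * F) := rpow_one_div_le_sqrt_of_sq_le_mul_rpow hS0 hq0 hSF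
    _ = √K * F ^ ((1 : ℝ) / 2) := by
      rw [Real.sqrt_mul (by positivity), Real.sqrt_eq_rpow F]

end Restriction

/-- Restriction estimate from Fourier decay alone: if `|μ̂(ξ)| ≤ C p^{-β/2}`
for `ξ ≠ 0`, then for every `q ≥ 4n/β` one has `‖(fμ)^∧‖_q ≤ C' ‖f‖_{L²(μ)}`
with `C'` independent of `p`. -/
theorem restriction_from_decay (n : ℕ) (β C q : ℝ)
    (hβ0 : 0 < β) (hβn : β < n) (hC : 0 < C)
    (hq : 4 * n / β ≤ q) :
    ∃ C' : ℝ, 0 < C' ∧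
      ∀ (p : ℕ) [Fact p.Prime] (μ : (Fin n → ZMod p) → ℝ),
        (∀ x, 0 ≤ μ x) → (∑ x, μ x) = 1 →
        (∀ ξ, ξ ≠ 0 → ‖dft (fun x => (μ x : ℂ)) ξ‖ ≤ C * (p : ℝ) ^ (-β / 2)) →
        ∀ f : (Fin n → ZMod p) → ℂ,
          (∑ ξ : Fin n → ZMod p, ‖dft (fun x => f x * μ x) ξ‖ ^ q) ^ (1 / q)
            ≤ C' * (∑ x : Fin n → ZMod p, ‖f x‖ ^ 2 * μ x) ^ ((1 : ℝ) / 2) := by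
  have hq2 : 2 ≤ q := by
    have : 4 ≤ 4 * n / β := by rw [le_div_iff₀ hβ0]; linarith
    linarith
  have hβq : 4 * n ≤ β * q := by
    rw [div_le_iff₀ hβ0] at hq
    linarith
  refine ⟨√(1 + C), by positivity, fun p _ μ hμ0 hμ1 hdecay f => ?_⟩
  have hp : (1 : ℝ) ≤ p := by exact_mod_cast (Fact.out : p.Prime).one_lt.le
  have hgain : (p : ℝ) ^ (-β / 2) * ((p : ℝ) ^ n) ^ (2 / q) ≤ 1 := by
    rw [← Real.rpow_natCast, ← Real.rpow_mul (by positivity), ← Real.rpow_add (by positivity)]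
    apply Real.rpow_le_one_of_one_le_of_nonpos hp
    have : (n : ℝ) * (2 / q) ≤ β / 2 := by
      rw [mul_div_assoc', div_le_iff₀ (by linarith)]
      nlinarith
    linarith
  refine le_trans (rpow_sum_norm_dft_le_of_decay hq2 hμ0 hμ1 (by positivity) hdecay f) ?_
  refine mul_le_mul_of_nonneg_right (Real.sqrt_le_sqrt ?_)
    (Real.rpow_nonneg (sum_nonneg fun x _ => mul_nonneg (sq_nonneg _) (hμ0 x)) _)
  linarith [mul_le_of_le_one_right hC.le hgain]
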